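/- Let Ψ ∈ L^∞(M_n) be such that the Toeplitz operator T_{zΨ} : H²(ℂ^n) → H²(ℂ^n) is surjective. Then dim ker T_Ψ ≥ n. -/

import Mathlib

open MeasureTheory ComplexConjugate

noncomputable section

namespace MeroIdx

/-! Singular values and essential norm of operators between Hilbert spaces -/

variable {H K : Type*} [NormedAddCommGroup H] [InnerProductSpace ℂ H]
  [NormedAddCommGroup K] [InnerProductSpace ℂ K]

/-- `sValue m T` is the `m`-th singular value of `T`, defined as the distance from `T`
to the operators of rank at most `m`. -/
def sValue (m : ℕ) (T : H →L[ℂ] K) : ℝ :=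
  sInf { c : ℝ | ∃ R : H →L[ℂ] K, Module.rank ℂ ↥(LinearMap.range (R : H →ₗ[ℂ] K)) ≤ m ∧ c = ‖T - R‖ }

/-- The essential norm of `T` : the distance from `T` to the compact operators. -/
def essNorm (T : H →L[ℂ] K) : ℝ :=
  sInf { c : ℝ | ∃ S : H →L[ℂ] K, IsCompactOperator S ∧ c = ‖T - S‖ }

/-! The circle, L², Hardy space -/

instance : Fact (0 < 2 * Real.pi) := ⟨by positivity⟩

abbrev circ : Type := AddCircle (2 * Real.pi)

/-- Normalized Lebesgue (Haar) measure on the circle. -/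
def mu : Measure circ := @AddCircle.haarAddCircle (2 * Real.pi) _

instance : IsProbabilityMeasure mu := by unfold mu; infer_instance

abbrev L2 (m : ℕ) := Lp (EuclideanSpace ℂ (Fin m)) 2 mu

/-- The function `ζ ↦ ζ` on the circle (i.e. `t ↦ exp (i t)`). -/
def expmap : circ → ℂ := fun t => fourier 1 t

/-- The element `z^k ⬝ e_i` of `L²(ℂ^m)`. -/
def fvec (m : ℕ) (k : ℤ) (i : Fin m) : L2 m :=
  ContinuousMap.toLp 2 mu ℂ
    ⟨fun t => (fourier k t : ℂ) • (EuclideanSpace.single i (1 : ℂ)),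
      ((fourier k).continuous).smul continuous_const⟩

/-- The span of the negative-frequency basis vectors. -/
def negSpan (m : ℕ) : Submodule ℂ (L2 m) :=
  Submodule.span ℂ { f | ∃ k : ℤ, k < 0 ∧ ∃ i : Fin m, f = fvec m k i }

/-- The Hardy space `H²(ℂ^m)`: the orthogonal complement of the negative frequencies,
i.e. the functions in `L²` whose negative Fourier coefficients vanish. -/
def Hardy (m : ℕ) : Submodule ℂ (L2 m) := (negSpan m)ᗮ

instance (m : ℕ) : CompleteSpace ↥(Hardy m) :=
  (Submodule.isClosed_orthogonal _).completeSpace_coe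

/-- Orthogonal projection onto the Hardy space. -/
def Pplus (m : ℕ) : L2 m →L[ℂ] ↥(Hardy m) := Submodule.orthogonalProjection (Hardy m)

/-- `P₊` as an endomorphism of `L²`. -/
def PplusL (m : ℕ) : L2 m →L[ℂ] L2 m := (Hardy m).subtypeL.comp (Pplus m)

/-- `P₋ = I - P₊`, the orthogonal projection onto `H²₋(ℂ^m) = L² ⊖ H²`. -/
def PminusL (m : ℕ) : L2 m →L[ℂ] L2 m := ContinuousLinearMap.id ℂ (L2 m) - PplusL m

/-! Matrix symbols, multiplication operators, Hankel and Toeplitz operators -/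

/-- The continuous linear map `ℂ^n → ℂ^m` given by a matrix. -/
def matCLM {m n : ℕ} (A : Matrix (Fin m) (Fin n) ℂ) :
    EuclideanSpace ℂ (Fin n) →L[ℂ] EuclideanSpace ℂ (Fin m) :=
  LinearMap.toContinuousLinearMap (Matrix.toEuclideanLin A)

/-- The operator norm of a matrix (as an operator `ℓ²(n) → ℓ²(m)`). -/
def matOpNorm {m n : ℕ} (A : Matrix (Fin m) (Fin n) ℂ) : ℝ := ‖matCLM A‖

/-- The `j`-th singular value of a matrix. -/
def matSV {m n : ℕ} (j : ℕ) (A : Matrix (Fin m) (Fin n) ℂ) : ℝ := sValue j (matCLM A)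

/-- Essential supremum of a (nonnegative) real function on the circle. -/
def essSupR (g : circ → ℝ) : ℝ := (essSup (fun t => ENNReal.ofReal (g t)) mu).toReal

/-- The `L^∞(M_{m,n})`-norm: essential supremum of the pointwise operator norm. -/
def linfNorm {m n : ℕ} (Φ : circ → Matrix (Fin m) (Fin n) ℂ) : ℝ :=
  essSupR fun t => matOpNorm (Φ t)

/-- `M` is the operator of multiplication by the matrix function `Φ` on `L²`. -/
def IsMulOp {m n : ℕ} (Φ : circ → Matrix (Fin m) (Fin n) ℂ) (M : L2 n →L[ℂ] L2 m) : Prop :=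
  ∀ f : L2 n, (M f : circ → EuclideanSpace ℂ (Fin m))
      =ᵐ[mu] fun t => Matrix.toEuclideanLin (Φ t) (f t)

/-- The Hankel operator `H_Φ = P₋ M_Φ : H²(ℂ^n) → H²₋(ℂ^m) ⊆ L²(ℂ^m)`,
presented in terms of the multiplication operator `M = M_Φ`. -/
def Hankel {m n : ℕ} (M : L2 n →L[ℂ] L2 m) : ↥(Hardy n) →L[ℂ] L2 m :=
  (PminusL m).comp (M.comp (Hardy n).subtypeL)

/-- The Toeplitz operator `T_Φ = P₊ M_Φ : H²(ℂ^n) → H²(ℂ^m)`. -/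
def Toeplitz {m n : ℕ} (M : L2 n →L[ℂ] L2 m) : ↥(Hardy n) →L[ℂ] ↥(Hardy m) :=
  (Pplus m).comp (M.comp (Hardy n).subtypeL)

/-! Blaschke–Potapov products and the class `H^∞_{(k)}` -/

/-- An elementary Blaschke–Potapov factor. -/
def bpFactor {n : ℕ} (l : ℂ) (P : Matrix (Fin n) (Fin n) ℂ) (z : ℂ) :
    Matrix (Fin n) (Fin n) ℂ :=
  ((z - l) / (1 - (starRingEnd ℂ) l * z)) • P + (1 - P)

/-- `B` (as a function on the circle) is the boundary-value function of a finite
Blaschke–Potapov product of degree `k`. -/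
def IsBPProd (n k : ℕ) (B : circ → Matrix (Fin n) (Fin n) ℂ) : Prop :=
  ∃ (r : ℕ) (U : Matrix (Fin n) (Fin n) ℂ) (l : Fin r → ℂ)
    (P : Fin r → Matrix (Fin n) (Fin n) ℂ),
    U ∈ Matrix.unitaryGroup (Fin n) ℂ ∧ (∀ j, ‖l j‖ < 1) ∧
    (∀ j, IsSelfAdjoint (P j) ∧ P j * P j = P j) ∧
    (∑ j, (P j).rank) = k ∧
    ∀ t, B t = U * (List.ofFn fun j => bpFactor (l j) (P j) (expmap t)).prod

/-- `Q ∈ H^∞_{(k)}(M_{m,n})`: there is a Blaschke–Potapov product `B` of degree `k`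
such that `QB ∈ H^∞`, i.e. multiplication by `QB` maps `H²(ℂ^n)` into `H²(ℂ^m)`. -/
def HkClass {m n : ℕ} (k : ℕ) (Q : circ → Matrix (Fin m) (Fin n) ℂ) : Prop :=
  ∃ (B : circ → Matrix (Fin n) (Fin n) ℂ) (M : L2 n →L[ℂ] L2 m),
    IsBPProd n k B ∧ IsMulOp (fun t => Q t * B t) M ∧
    ∀ f : L2 n, f ∈ Hardy n → M f ∈ Hardy m

/-- The nested sets `Ω_j^{(k)}(Φ)` from superoptimal approximation:
`Ω_0` consists of the best approximants from `H^∞_{(k)}` in the `L^∞` norm and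
`Ω_{j+1}` consists of those elements of `Ω_j` minimizing `ess sup s_{j+1}(Φ - Q)`. -/
def Omega {m n : ℕ} (k : ℕ) (Φ : circ → Matrix (Fin m) (Fin n) ℂ) :
    ℕ → Set (circ → Matrix (Fin m) (Fin n) ℂ)
  | 0 => { Q | HkClass k Q ∧ ∀ Q', HkClass k Q' →
      linfNorm (fun t => Φ t - Q t) ≤ linfNorm (fun t => Φ t - Q' t) }
  | (j+1) => { Q | Q ∈ Omega k Φ j ∧ ∀ Q' ∈ Omega k Φ j,
      essSupR (fun t => matSV (j+1) (Φ t - Q t)) ≤ essSupR (fun t => matSV (j+1) (Φ t - Q' t)) }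

/-- The superoptimal singular values `t_j^{(k)}(Φ)` of degree `k`. -/
def tSV {m n : ℕ} (k : ℕ) (Φ : circ → Matrix (Fin m) (Fin n) ℂ) (j : ℕ) : ℝ :=
  sInf { v : ℝ | ∃ Q ∈ Omega k Φ j, v = essSupR fun t => matSV j (Φ t - Q t) }

/-- `Φ` is `k`-admissible: `s_k(H_Φ) < s_{k-1}(H_Φ)` and the essential norm of `H_Φ`
is less than every nonzero superoptimal singular value of degree `k` of `Φ`. -/
def kAdmissible {n : ℕ} (k : ℕ) (Φ : circ → Matrix (Fin n) (Fin n) ℂ)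
    (MΦ : L2 n →L[ℂ] L2 n) : Prop :=
  IsMulOp Φ MΦ ∧ sValue k (Hankel MΦ) < sValue (k-1) (Hankel MΦ) ∧
  ∀ j : ℕ, tSV k Φ j ≠ 0 → essNorm (Hankel MΦ) < tSV k Φ j

/-- The squared weighted norm `‖f‖²_W = ∫ (W(ζ) f(ζ), f(ζ)) dm(ζ)` for a matrix weight. -/
def wNormSq {n : ℕ} (W : circ → Matrix (Fin n) (Fin n) ℂ) (f : L2 n) : ℝ :=
  ∫ t, (inner ℂ (Matrix.toEuclideanLin (W t) (f t)) (f t) : ℂ).re ∂mu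

/-- `J` is the flip operator `(Jf)(ζ) = conj ζ • conj (f ζ)` on `L²(ℂ^m)`. -/
def IsFlip (m : ℕ) (J : L2 m → L2 m) : Prop :=
  ∀ f : L2 m, (J f : circ → EuclideanSpace ℂ (Fin m)) =ᵐ[mu]
    fun t => (starRingEnd ℂ) (expmap t) •
      (WithLp.toLp 2 (fun i => (starRingEnd ℂ) (f t i)) : EuclideanSpace ℂ (Fin m))

/-- `Φ ∈ L^∞(M_{m,n})`: measurable and essentially bounded. -/
def MemLinf {m n : ℕ} (Φ : circ → Matrix (Fin m) (Fin n) ℂ) : Prop :=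
  AEStronglyMeasurable Φ mu ∧
    essSup (fun t => ENNReal.ofReal (matOpNorm (Φ t))) mu < ⊤

/-!
If `T_{zΨ} f = e` for a constant vector `e`, then `zΨ f - e` is orthogonal to `H²`; since
`zH²` is orthogonal both to `zΨ f - e` and to the constants, `Ψ f = z̄ (zΨ f)` is orthogonal
to `H²`, i.e. `T_Ψ f = 0`. Solving `T_{zΨ} f_i = e_i` for the standard basis gives `n`
vectors of `ker T_Ψ` whose images under `T_{zΨ}` are orthonormal, hence independent.
-/

open scoped ComplexInnerProductSpace

section Shift

variable {n : ℕ}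

lemma memLp_fourier_smul (k : ℤ) (g : L2 n) :
    MemLp (fun t => fourier k t • (g t : EuclideanSpace ℂ (Fin n))) 2 mu := by
  refine (Lp.memLp g).of_le
    ((fourier k).continuous.aestronglyMeasurable.smul (Lp.aestronglyMeasurable g)) ?_
  filter_upwards with t
  rw [norm_smul, fourier_apply, Circle.norm_coe, one_mul]

def mulFourier (k : ℤ) (g : L2 n) : L2 n := (memLp_fourier_smul k g).toLp _

lemma coeFn_mulFourier (k : ℤ) (g : L2 n) :
    (mulFourier k g : circ → EuclideanSpace ℂ (Fin n)) =ᵐ[mu] fun t => fourier k t • g t :=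
  MemLp.coeFn_toLp _

lemma coeFn_fvec (k : ℤ) (i : Fin n) :
    (fvec n k i : circ → EuclideanSpace ℂ (Fin n)) =ᵐ[mu]
      fun t => fourier k t • EuclideanSpace.single i (1 : ℂ) :=
  ContinuousMap.coeFn_toLp (p := 2) (μ := mu) (𝕜 := ℂ) _

lemma mulFourier_fvec (k l : ℤ) (i : Fin n) : mulFourier k (fvec n l i) = fvec n (k + l) i := by
  apply Lp.ext
  filter_upwards [coeFn_mulFourier k (fvec n l i), coeFn_fvec l i, coeFn_fvec (k + l) i]
    with t h₁ h₂ h₃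
  rw [h₁, h₂, h₃, smul_smul, ← fourier_add]

lemma inner_mulFourier_neg_left (k : ℤ) (u g : L2 n) :
    ⟪mulFourier (-k) u, g⟫ = ⟪u, mulFourier k g⟫ := by
  rw [L2.inner_def, L2.inner_def]
  refine integral_congr_ae ?_
  filter_upwards [coeFn_mulFourier (-k) u, coeFn_mulFourier k g] with t h₁ h₂
  rw [h₁, h₂, inner_smul_left, inner_smul_right, fourier_neg, Complex.conj_conj]

lemma inner_mulFourier_neg_right (k : ℤ) (u g : L2 n) :
    ⟪u, mulFourier (-k) g⟫ = ⟪mulFourier k u, g⟫ := by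
  rw [← inner_conj_symm, inner_mulFourier_neg_left, inner_conj_symm]

lemma inner_fvec_fvec (k l : ℤ) (i j : Fin n) :
    ⟪fvec n k i, fvec n l j⟫ = if k = l ∧ i = j then 1 else 0 := by
  have hfourier : ∫ t, conj (fourier k t) * fourier l t ∂mu = if k = l then 1 else 0 := by
    rw [← orthonormal_iff_ite.mp (orthonormal_fourier (T := 2 * Real.pi)) k l, L2.inner_def]
    refine integral_congr_ae ?_
    filter_upwards [coeFn_fourierLp 2 k, coeFn_fourierLp 2 l] with t h₁ h₂
    rw [RCLike.inner_apply, h₁, h₂, mul_comm]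
  have hpointwise : (fun t => ⟪fvec n k i t, fvec n l j t⟫) =ᵐ[mu]
      fun t => (if i = j then 1 else 0) * (conj (fourier k t) * fourier l t) := by
    filter_upwards [coeFn_fvec k i, coeFn_fvec l j] with t h₁ h₂
    rw [h₁, h₂, inner_smul_left, inner_smul_right, EuclideanSpace.inner_single_left,
      PiLp.single_apply]
    split_ifs <;> simp_all
  rw [L2.inner_def, integral_congr_ae hpointwise, integral_const_mul, hfourier]
  by_cases hkl : k = l <;> by_cases hij : i = j <;> simp [hkl, hij]

lemma mem_Hardy_iff {g : L2 n} : g ∈ Hardy n ↔ ∀ k < 0, ∀ i, ⟪fvec n k i, g⟫ = 0 := by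
  refine ⟨fun hg k hk i => (Submodule.mem_orthogonal _ g).mp hg _
    (Submodule.subset_span ⟨k, hk, i, rfl⟩), fun h => ?_⟩
  refine (Submodule.mem_orthogonal _ g).mpr fun u hu => ?_
  induction hu using Submodule.span_induction with
  | mem x hx => obtain ⟨k, hk, i, rfl⟩ := hx; exact h k hk i
  | zero => exact inner_zero_left _
  | add x y _ _ hx hy => rw [inner_add_left, hx, hy, add_zero]
  | smul c x _ hx => rw [inner_smul_left, hx, mul_zero]

lemma fvec_zero_mem_Hardy (i : Fin n) : fvec n 0 i ∈ Hardy n :=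
  mem_Hardy_iff.mpr fun k hk j => by simp [inner_fvec_fvec, hk.ne]

lemma orthonormal_fvec_zero :
    Orthonormal ℂ fun i : Fin n => (⟨fvec n 0 i, fvec_zero_mem_Hardy i⟩ : Hardy n) :=
  orthonormal_iff_ite.mpr fun i j => by simp [Submodule.coe_inner, inner_fvec_fvec]

lemma mulFourier_one_mem_Hardy {g : L2 n} (hg : g ∈ Hardy n) : mulFourier 1 g ∈ Hardy n :=
  mem_Hardy_iff.mpr fun k hk i => by
    rw [← inner_mulFourier_neg_left, mulFourier_fvec]
    exact mem_Hardy_iff.mp hg _ (by omega) i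

lemma inner_mulFourier_one_fvec_zero {h : L2 n} (hh : h ∈ Hardy n) (i : Fin n) :
    ⟪mulFourier 1 h, fvec n 0 i⟫ = 0 := by
  rw [← inner_mulFourier_neg_right, mulFourier_fvec, inner_eq_zero_symm]
  exact mem_Hardy_iff.mp hh _ (by omega) i

lemma mulFourier_neg_one_mem_orthogonal_Hardy {g : L2 n} {i : Fin n}
    (hg : g - fvec n 0 i ∈ (Hardy n)ᗮ) : mulFourier (-1) g ∈ (Hardy n)ᗮ := by
  refine (Submodule.mem_orthogonal _ _).mpr fun h hh => ?_
  rw [inner_mulFourier_neg_right, ← sub_add_cancel g (fvec n 0 i), inner_add_right,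
    (Submodule.mem_orthogonal _ _).mp hg _ (mulFourier_one_mem_Hardy hh),
    inner_mulFourier_one_fvec_zero hh, add_zero]

end Shift

section Toeplitz

variable {m n : ℕ} {Ψ : circ → Matrix (Fin m) (Fin n) ℂ} {M Mz : L2 n →L[ℂ] L2 m}

lemma IsMulOp.apply_eq_mulFourier_neg_one (hM : IsMulOp Ψ M)
    (hMz : IsMulOp (fun t => expmap t • Ψ t) Mz) (f : L2 n) :
    M f = mulFourier (-1) (Mz f) := by
  apply Lp.ext
  filter_upwards [hM f, hMz f, coeFn_mulFourier (-1) (Mz f)] with t h₁ h₂ h₃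
  rw [h₁, h₃, h₂, map_smul, LinearMap.smul_apply, smul_smul, expmap, ← fourier_add,
    neg_add_cancel, fourier_zero, one_smul]

lemma toeplitz_eq_zero_of_toeplitz_mul_z_eq_fvec_zero (hM : IsMulOp Ψ M)
    (hMz : IsMulOp (fun t => expmap t • Ψ t) Mz) {f : Hardy n} {i : Fin m}
    (hf : Toeplitz Mz f = ⟨fvec m 0 i, fvec_zero_mem_Hardy i⟩) :
    Toeplitz M f = 0 := by
  have hres : (Mz f : L2 m) - fvec m 0 i ∈ (Hardy m)ᗮ := by
    have h := (Hardy m).sub_starProjection_mem_orthogonal (Mz f)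
    have hproj : (Hardy m).starProjection (Mz f) = fvec m 0 i := by
      rw [Submodule.starProjection_apply]
      exact congrArg Subtype.val hf
    rwa [hproj] at h
  have hM_orth : M f ∈ (Hardy m)ᗮ := by
    rw [hM.apply_eq_mulFourier_neg_one hMz]
    exact mulFourier_neg_one_mem_orthogonal_Hardy hres
  exact (Submodule.orthogonalProjectionOnto_eq_zero_iff (K := Hardy m)).mpr hM_orth

end Toeplitz

theorem rank_ker_toeplitz_ge_of_surjective_general (n : ℕ)
    (Ψ : circ → Matrix (Fin n) (Fin n) ℂ)
    (M : L2 n →L[ℂ] L2 n) (hM : IsMulOp Ψ M)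
    (Mz : L2 n →L[ℂ] L2 n) (hMz : IsMulOp (fun t => expmap t • Ψ t) Mz)
    (hsurj : Function.Surjective (Toeplitz Mz)) :
    (n : Cardinal) ≤ Module.rank ℂ ↥(LinearMap.ker (Toeplitz M : ↥(Hardy n) →ₗ[ℂ] ↥(Hardy n))) := by
  choose f hf using fun i => hsurj ⟨fvec n 0 i, fvec_zero_mem_Hardy i⟩
  set K := LinearMap.ker (Toeplitz M : Hardy n →ₗ[ℂ] Hardy n)
  have hker : ∀ i, f i ∈ K := fun i =>
    toeplitz_eq_zero_of_toeplitz_mul_z_eq_fvec_zero hM hMz (hf i)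
  have hli : LinearIndependent ℂ fun i => (⟨f i, hker i⟩ : K) := by
    refine .of_comp ((Toeplitz Mz : Hardy n →ₗ[ℂ] Hardy n) ∘ₗ K.subtype) ?_
    have h := (orthonormal_fvec_zero (n := n)).linearIndependent
    rw [← funext hf] at h
    exact h
  simpa using hli.cardinal_le_rank

/-- If the Toeplitz operator `T_{zΨ}` is surjective, then
`dim ker T_Ψ ≥ n`. -/
theorem rank_ker_toeplitz_ge_of_surjective (n : ℕ)
    (Ψ : circ → Matrix (Fin n) (Fin n) ℂ) (hΨ : MemLinf Ψ)
    (M : L2 n →L[ℂ] L2 n) (hM : IsMulOp Ψ M)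
    (Mz : L2 n →L[ℂ] L2 n) (hMz : IsMulOp (fun t => expmap t • Ψ t) Mz)
    (hsurj : Function.Surjective (Toeplitz Mz)) :
    (n : Cardinal) ≤ Module.rank ℂ ↥(LinearMap.ker (Toeplitz M : ↥(Hardy n) →ₗ[ℂ] ↥(Hardy n))) :=
  rank_ker_toeplitz_ge_of_surjective_general n Ψ M hM Mz hMz hsurj

end MeroIdx
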